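/- Let σ > 0, β < 0, ω > 0. Define q(ω) = (√ω/(-4πβ))^{1/(2σ)} and u_ω(x) = q(ω)·e^{-√ω‖x‖}/(4π‖x‖) on ℝ³. Then the mass M(ω) = ‖u_ω‖²_{L²(ℝ³)} = q(ω)²/(8π√ω) satisfies: M is strictly increasing in ω when σ < 1, strictly decreasing when σ > 1, and constant equal to 1/(-32π²β) when σ = 1. -/

import Mathlib

open Real Set

/-! Since `q(ω)² = (√ω / c)^{1/σ}` with `c = -4πβ > 0`, the mass is a power law
`M(ω) = K ω^{1/(2σ) - 1/2}` with `K = (8π c^{1/σ})⁻¹ > 0`, and the sign of the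
exponent `1/(2σ) - 1/2` is the sign of `1 - σ`. -/

lemma sq_rpow_div_sqrt_eq {a c p ω : ℝ} (hc : 0 < c) (hω : 0 < ω) :
    ((√ω / c) ^ p) ^ 2 / (a * √ω) = (a * c ^ (2 * p))⁻¹ * ω ^ (p - 1 / 2) := by
  have hsq : ((√ω / c) ^ p) ^ 2 = ω ^ p / c ^ (2 * p) := by
    rw [← rpow_natCast, ← rpow_mul (by positivity), div_rpow (sqrt_nonneg ω) hc.le,
      sqrt_eq_rpow, ← rpow_mul hω.le]
    ring_nf
  rw [hsq, rpow_sub hω, ← sqrt_eq_rpow]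
  field_simp

lemma strictMonoOn_const_mul_rpow {K r : ℝ} (hK : 0 < K) (hr : 0 < r) :
    StrictMonoOn (fun x : ℝ ↦ K * x ^ r) (Ioi 0) := fun _ hx _ _ hxy ↦
  mul_lt_mul_of_pos_left (rpow_lt_rpow (le_of_lt hx) hxy hr) hK

lemma strictAntiOn_const_mul_rpow {K r : ℝ} (hK : 0 < K) (hr : r < 0) :
    StrictAntiOn (fun x : ℝ ↦ K * x ^ r) (Ioi 0) := fun _ hx _ _ hxy ↦
  mul_lt_mul_of_pos_left (rpow_lt_rpow_of_neg hx hxy hr) hK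

lemma one_div_two_mul_sub_half_pos {σ : ℝ} (hσ : 0 < σ) (hσ1 : σ < 1) :
    0 < 1 / (2 * σ) - 1 / 2 := by
  rw [sub_pos, div_lt_div_iff₀ two_pos (by positivity)]
  linarith

lemma one_div_two_mul_sub_half_neg {σ : ℝ} (hσ1 : 1 < σ) :
    1 / (2 * σ) - 1 / 2 < 0 := by
  rw [sub_neg, div_lt_div_iff₀ (by positivity) two_pos]
  linarith

/-- Monotonicity of the mass `M(ω) = q(ω)²/(8π√ω)` of the 3D bound state
`u_ω = q(ω) G_ω`, `q(ω) = (√ω/(-4πβ))^{1/(2σ)}`: increasing for `σ < 1`,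
decreasing for `σ > 1`, and constantly equal to `1/(-32π²β)` for `σ = 1`. -/
theorem bound_state_mass_3d (σ β : ℝ) (hσ : 0 < σ) (hβ : β < 0)
    (q M : ℝ → ℝ)
    (hq : ∀ ω, q ω = (Real.sqrt ω / (-4 * Real.pi * β)) ^ (1 / (2 * σ)))
    (hM : ∀ ω, M ω = (q ω) ^ 2 / (8 * Real.pi * Real.sqrt ω)) :
    (σ < 1 → StrictMonoOn M (Ioi 0)) ∧
    (1 < σ → StrictAntiOn M (Ioi 0)) ∧
    (σ = 1 → ∀ ω : ℝ, 0 < ω → M ω = 1 / (-32 * Real.pi ^ 2 * β)) := by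
  have hc : 0 < -4 * π * β := by nlinarith [pi_pos]
  set K := (8 * π * (-4 * π * β) ^ (2 * (1 / (2 * σ))))⁻¹
  have hK : 0 < K := by positivity
  have hMK : EqOn (fun ω ↦ K * ω ^ (1 / (2 * σ) - 1 / 2)) M (Ioi 0) := fun ω hω ↦ by
    rw [hM, hq, sq_rpow_div_sqrt_eq hc hω]
  refine ⟨fun hσ1 ↦ ?_, fun hσ1 ↦ ?_, fun hσ1 ω hω ↦ ?_⟩
  · exact (strictMonoOn_const_mul_rpow hK (one_div_two_mul_sub_half_pos hσ hσ1)).congr hMK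
  · exact (strictAntiOn_const_mul_rpow hK (one_div_two_mul_sub_half_neg hσ1)).congr hMK
  · rw [← hMK hω]
    subst hσ1
    norm_num [K]
    ring
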